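/- arXiv:1711.05305 — 2 statements merged into one kernel-verified Lean document; each statement's English description precedes it below -/
import Mathlib

section
/- The sequence (θ_t) with θ_0 = 1 and θ_{t+1} the positive root of θ² + (γθ_t²)θ − θ_t² = 0 satisfies θ_t ≤ 2/(tγ + 2) ≤ 1 for all t ≥ 0. -/
/-!
θ_{t+1} is the nonnegative root of x² + γθ_t² x = θ_t², and x ↦ x² + px is increasing on
x ≥ 0 for p ≥ 0, so θ_{t+1} ≤ b as soon as θ_t² ≤ b² + γθ_t² b. For b = 2/(e + γ), where
θ_t ≤ 2/e with e = tγ + 2, clearing denominators reduces this to θ_t² (e² - γ²) ≤ 4.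
-/

lemma quadratic_root_sq_add_mul_eq (p q : ℝ) (h : 0 ≤ p ^ 2 + 4 * q) :
    ((√(p ^ 2 + 4 * q) - p) / 2) ^ 2 + p * ((√(p ^ 2 + 4 * q) - p) / 2) = q := by
  linear_combination Real.sq_sqrt h / 4

lemma quadratic_root_nonneg (p : ℝ) {q : ℝ} (hq : 0 ≤ q) :
    0 ≤ (√(p ^ 2 + 4 * q) - p) / 2 := by
  have : p ≤ √(p ^ 2 + 4 * q) := Real.le_sqrt_of_sq_le (by linarith)
  linarith

lemma le_of_sq_add_mul_le {x y p q : ℝ} (hy : 0 ≤ y) (hp : 0 ≤ p)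
    (hx : x ^ 2 + p * x = q) (hyq : q ≤ y ^ 2 + p * y) : x ≤ y := by
  nlinarith

lemma le_two_div_add_of_sq_add_mul_eq {γ a e x : ℝ} (hγ : 0 ≤ γ) (he : 0 < e) (ha : 0 ≤ a)
    (hae : a ≤ 2 / e) (hx : x ^ 2 + γ * a ^ 2 * x = a ^ 2) : x ≤ 2 / (e + γ) := by
  refine le_of_sq_add_mul_le (by positivity) (by positivity) hx ?_
  have hae_sq : (a * e) ^ 2 ≤ 2 ^ 2 :=
    pow_le_pow_left₀ (by positivity) ((le_div_iff₀ he).mp hae) 2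
  have : 0 < e + γ := by positivity
  rw [div_pow, ← sub_nonneg]
  field_simp
  nlinarith [sq_nonneg (γ * a)]

theorem stmt_3_general (γ : ℝ) (hγ : 0 < γ) (θ : ℕ → ℝ) (h0 : θ 0 = 1)
    (hrec : ∀ t, θ (t + 1) = (Real.sqrt (γ^2 * (θ t)^4 + 4 * (θ t)^2) - γ * (θ t)^2) / 2) :
    ∀ t : ℕ, θ t ≤ 2 / (t * γ + 2) ∧ 2 / (t * γ + 2) ≤ 1 := by
  have hroot (t : ℕ) : θ (t + 1) =
      (√((γ * θ t ^ 2) ^ 2 + 4 * θ t ^ 2) - γ * θ t ^ 2) / 2 := by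
    rw [hrec t]; ring_nf
  have hquad (t : ℕ) : θ (t + 1) ^ 2 + γ * θ t ^ 2 * θ (t + 1) = θ t ^ 2 := by
    rw [hroot t]; exact quadratic_root_sq_add_mul_eq _ _ (by positivity)
  have hnonneg : ∀ t, 0 ≤ θ t
    | 0 => by simp [h0]
    | t + 1 => by rw [hroot t]; exact quadratic_root_nonneg _ (by positivity)
  have hbound (t : ℕ) : θ t ≤ 2 / (t * γ + 2) := by
    induction t with
    | zero => simp [h0]
    | succ t ih =>
      rw [show ((t + 1 : ℕ) : ℝ) * γ + 2 = t * γ + 2 + γ by push_cast; ring]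
      exact le_two_div_add_of_sq_add_mul_eq hγ.le (by positivity) (hnonneg t) ih (hquad t)
  exact fun t => ⟨hbound t, (div_le_one (by positivity)).2 (le_add_of_nonneg_left (by positivity))⟩

theorem stmt_3 (γ : ℝ) (hγ : 0 < γ) (hγ1 : γ ≤ 1) (θ : ℕ → ℝ) (h0 : θ 0 = 1)
    (hrec : ∀ t, θ (t + 1) = (Real.sqrt (γ^2 * (θ t)^4 + 4 * (θ t)^2) - γ * (θ t)^2) / 2) :
    ∀ t : ℕ, θ t ≤ 2 / (t * γ + 2) ∧ 2 / (t * γ + 2) ≤ 1 :=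
  stmt_3_general γ hγ θ h0 hrec
end

section
/- If 1/θ_t ≥ (γt + 2)/2 and 1/θ_{t+1}² − γ/θ_{t+1} = 1/θ_t² with θ_{t+1} > 0, then 1/θ_{t+1} ≥ (γ(t+1) + 2)/2. -/
lemma add_le_of_sq_le_sq_sub_mul {x γ b : ℝ} (hx : 0 < x) (h : b ^ 2 ≤ x ^ 2 - γ * x) :
    γ / 2 + b ≤ x := by
  have hγx : 0 ≤ x - γ := by
    refine (mul_nonneg_iff_of_pos_left hx).mp ?_
    nlinarith [sq_nonneg b]
  -- completing the square: `(x - γ / 2) ^ 2 = (x ^ 2 - γ * x) + γ ^ 2 / 4`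
  have hsq : b ^ 2 ≤ (x - γ / 2) ^ 2 := by nlinarith [sq_nonneg γ]
  linarith [(abs_le_of_sq_le_sq' hsq (by linarith)).2]

theorem stmt_5_general (γ : ℝ) (hγ : 0 < γ) (t : ℕ) (θt θt1 : ℝ)
    (hθt1 : 0 < θt1)
    (hind : 1 / θt ≥ (γ * t + 2) / 2)
    (hrec : 1 / θt1^2 - γ / θt1 = 1 / θt^2) :
    1 / θt1 ≥ (γ * (t + 1) + 2) / 2 := by
  have hb : 0 ≤ (γ * t + 2) / 2 := by positivity
  have hsq : ((γ * t + 2) / 2) ^ 2 ≤ (1 / θt1) ^ 2 - γ * (1 / θt1) :=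
    calc ((γ * t + 2) / 2) ^ 2 ≤ (1 / θt) ^ 2 := pow_le_pow_left₀ hb hind 2
      _ = (1 / θt1) ^ 2 - γ * (1 / θt1) := by rw [div_pow, one_pow, ← hrec]; ring
  linarith [add_le_of_sq_le_sq_sub_mul (one_div_pos.2 hθt1) hsq]

theorem stmt_5 (γ : ℝ) (hγ : 0 < γ) (hγ1 : γ ≤ 1) (t : ℕ) (θt θt1 : ℝ)
    (hθt : 0 < θt) (hθt1 : 0 < θt1)
    (hind : 1 / θt ≥ (γ * t + 2) / 2)
    (hrec : 1 / θt1^2 - γ / θt1 = 1 / θt^2) :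
    1 / θt1 ≥ (γ * (t + 1) + 2) / 2 :=
  stmt_5_general γ hγ t θt θt1 hθt1 hind hrec
end
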